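/- arXiv:1902.07330 — 4 statements merged into one kernel-verified Lean document; each statement's English description precedes it below -/
import Mathlib

section
/- Let λ > 1 be a real number and m ≥ 2 an integer. For each j with 1 ≤ j ≤ m set A_{m,j} = ∏_{1 ≤ i ≤ m, i ≠ j} (λ^i − 1)/(λ^{i−j} − 1). Then for every integer k with 0 ≤ k ≤ m − 1 one has Σ_{j=1}^m j · A_{m,j} · λ^{−kj} ≠ 0. -/
open Polynomial Finset

theorem factor_eq_aux (lam : ℝ) (hlam : 1 < lam) (i j : ℕ) (hij : i ≠ j) :
    (lam ^ i - 1) / (lam ^ ((i : ℤ) - (j : ℤ)) - 1)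
      = ((lam⁻¹) ^ j - (lam⁻¹) ^ i)⁻¹ * (1 - (lam⁻¹) ^ i) := by
  have hl0 : (0:ℝ) < lam := lt_trans one_pos hlam
  have hl0' : lam ≠ 0 := hl0.ne'
  have hinj := zpow_right_injective₀ hl0 hlam.ne'
  have hA : lam ^ (i:ℤ) ≠ 0 := zpow_ne_zero _ hl0'
  have hB : lam ^ (j:ℤ) ≠ 0 := zpow_ne_zero _ hl0'
  have hden1 : lam ^ ((i : ℤ) - (j : ℤ)) - 1 ≠ 0 := by
    intro h
    have h2 : lam ^ ((i : ℤ) - (j : ℤ)) = lam ^ (0 : ℤ) := by rw [zpow_zero]; linarith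
    have := hinj h2
    omega
  have hden2 : (lam⁻¹) ^ j - (lam⁻¹) ^ i ≠ 0 := by
    intro h
    have h2 : ((lam⁻¹) ^ j) = ((lam⁻¹) ^ i) := by linarith
    rw [inv_pow, inv_pow, inv_inj] at h2
    have h3 : lam ^ (j : ℤ) = lam ^ (i : ℤ) := by rw [zpow_natCast, zpow_natCast]; exact h2
    have := hinj h3
    omega
  have hAB : lam ^ (i:ℤ) * (lam ^ (j:ℤ))⁻¹ - 1 ≠ 0 := by
    have h := hden1
    rw [zpow_sub₀ hl0', div_eq_mul_inv] at h
    exact h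
  rw [inv_mul_eq_div, div_eq_div_iff hden1 hden2]
  have hq : ∀ n : ℕ, (lam⁻¹) ^ n = (lam ^ (n:ℤ))⁻¹ := by
    intro n; rw [zpow_natCast, inv_pow]
  rw [hq, hq, ← zpow_natCast lam i, zpow_sub₀ hl0', div_eq_mul_inv]
  field_simp

/-- For `λ > 1` and `m ≥ 2`, with `A_{m,j} = ∏_{1 ≤ i ≤ m, i ≠ j} (λ^i − 1)/(λ^{i−j} − 1)`,
one has `∑_{j=1}^m j · A_{m,j} · λ^{−kj} ≠ 0` for every `0 ≤ k ≤ m − 1`. -/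
theorem lagrange_coefficients_weighted_sum_ne_zero
    (lam : ℝ) (hlam : 1 < lam) (m : ℕ) (hm : 2 ≤ m) :
    ∀ k : ℕ, k ≤ m - 1 →
      ∑ j ∈ Finset.Icc 1 m,
          (j : ℝ) *
            (∏ i ∈ (Finset.Icc 1 m).erase j,
                (lam ^ i - 1) / (lam ^ ((i : ℤ) - (j : ℤ)) - 1)) *
            lam ^ (-((k : ℤ) * (j : ℤ))) ≠ 0 := by
  intro k hk hS
  classical
  have hkm : k < m := by omega
  have hl0 : (0:ℝ) < lam := lt_trans one_pos hlam
  have hl0' : lam ≠ 0 := hl0.ne'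
  set q : ℝ := lam⁻¹ with hqdef
  have hq0 : 0 < q := inv_pos.mpr hl0
  have hq1 : q < 1 := inv_lt_one_of_one_lt₀ hlam
  have hqinj : Function.Injective (fun n : ℕ => q ^ n) := by
    have : StrictAnti (fun n : ℕ => q ^ n) :=
      fun a b h => pow_lt_pow_right_of_lt_one₀ hq0 hq1 h
    exact this.injective
  set s : Finset ℕ := Finset.Icc 1 m with hsdef
  have hcard : s.card = m := by simp [hsdef]
  set v : ℕ → ℝ := fun n => q ^ n with hvdef
  have hvs : Set.InjOn v s := hqinj.injOn
  set B : ℕ → ℝ := fun j => Polynomial.eval 1 (Lagrange.basis s v j) with hBdef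
  -- B j equals the product in the statement
  have hBeq : ∀ j ∈ s, (∏ i ∈ s.erase j,
      (lam ^ i - 1) / (lam ^ ((i : ℤ) - (j : ℤ)) - 1)) = B j := by
    intro j hj
    rw [hBdef]
    simp only [Lagrange.basis, eval_prod, Lagrange.basisDivisor, eval_mul, eval_C, eval_sub,
      eval_X]
    refine Finset.prod_congr rfl fun i hi => ?_
    have hij : i ≠ j := (Finset.mem_erase.mp hi).1
    exact factor_eq_aux lam hlam i j hij
  -- rewrite the exponential factor
  have hexp : ∀ j : ℕ, lam ^ (-((k : ℤ) * (j : ℤ))) = (q ^ k) ^ j := by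
    intro j
    rw [zpow_neg, ← Nat.cast_mul, zpow_natCast, ← inv_pow, ← hqdef, pow_mul]
  -- the hypothesis sum in new form
  have hS' : ∑ j ∈ s, (j : ℝ) * B j * (q ^ k) ^ j = 0 := by
    rw [← hS]
    refine Finset.sum_congr rfl fun j hj => ?_
    rw [hBeq j hj, hexp j]
  -- interpolation exactness
  have key : ∀ r : ℕ, r < m → ∑ j ∈ s, B j * (q ^ r) ^ j = 1 := by
    intro r hr
    have hdeg : (X ^ r : ℝ[X]).degree < s.card := by
      rw [degree_X_pow, hcard]
      exact_mod_cast hr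
    have h1 := Lagrange.eq_interpolate (f := (X ^ r : ℝ[X])) hvs hdeg
    have h2 := congrArg (Polynomial.eval 1) h1
    rw [Lagrange.interpolate_apply, eval_finset_sum] at h2
    simp only [eval_pow, eval_X, eval_mul, eval_C, one_pow] at h2
    rw [h2]
    refine Finset.sum_congr rfl fun j hj => ?_
    have h3 : (v j) ^ r = (q ^ r) ^ j := pow_right_comm q j r
    rw [h3, mul_comm]
  -- the polynomial h
  set P : ℝ[X] := (∑ j ∈ s, C (B j) * X ^ j) - 1 with hPdef
  have hPeval : ∀ x : ℝ, P.eval x = (∑ j ∈ s, B j * x ^ j) - 1 := by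
    intro x
    simp [hPdef, eval_finset_sum]
  have hP0 : P ≠ 0 := by
    intro h
    have := hPeval 0
    rw [h] at this
    simp only [eval_zero] at this
    have hz : ∑ j ∈ s, B j * (0:ℝ) ^ j = 0 := by
      refine Finset.sum_eq_zero fun j hj => ?_
      have hj1 : 1 ≤ j := (Finset.mem_Icc.mp hj).1
      rw [zero_pow (by omega), mul_zero]
    rw [hz] at this
    norm_num at this
  have hroots : ∀ r : ℕ, r < m → P.IsRoot (q ^ r) := by
    intro r hr
    rw [IsRoot, hPeval, key r hr, sub_self]
  -- derivative of P at q^k is zero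
  have hqk0 : (q : ℝ) ^ k ≠ 0 := pow_ne_zero _ hq0.ne'
  have hderiv : (derivative P).eval (q ^ k) = 0 := by
    have hD : derivative P = ∑ j ∈ s, C (B j * j) * X ^ (j - 1) := by
      rw [hPdef, derivative_sub, derivative_one, sub_zero, derivative_sum]
      refine Finset.sum_congr rfl fun j hj => ?_
      rw [derivative_C_mul, derivative_X_pow, C_mul, C_eq_natCast]
      ring
    have hmul : q ^ k * (derivative P).eval (q ^ k) = 0 := by
      rw [hD, eval_finset_sum]
      simp only [eval_mul, eval_C, eval_pow, eval_X]
      rw [Finset.mul_sum, ← hS']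
      refine Finset.sum_congr rfl fun j hj => ?_
      have hj1 : 1 ≤ j := (Finset.mem_Icc.mp hj).1
      have : (q ^ k) * (q ^ k) ^ (j - 1) = (q ^ k) ^ j := by
        rw [← pow_succ']
        congr 1
        omega
      calc q ^ k * (B j * (j:ℝ) * (q ^ k) ^ (j-1))
          = (j:ℝ) * B j * ((q ^ k) * (q ^ k) ^ (j-1)) := by ring
        _ = (j:ℝ) * B j * (q ^ k) ^ j := by rw [this]
    exact (mul_eq_zero.mp hmul).resolve_left hqk0
  -- q^k has root multiplicity ≥ 2
  have hmult2 : 1 < P.rootMultiplicity (q ^ k) := by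
    rw [one_lt_rootMultiplicity_iff_isRoot hP0]
    exact ⟨hroots k hkm, hderiv⟩
  -- counting roots
  have hdegP : P.natDegree ≤ m := by
    rw [hPdef]
    refine le_trans (natDegree_sub_le _ _) ?_
    rw [natDegree_one]
    simp only [max_le_iff]
    constructor
    · refine le_trans (natDegree_sum_le _ _) ?_
      rw [Finset.fold_max_le]
      refine ⟨Nat.zero_le _, fun j hj => ?_⟩
      refine le_trans (natDegree_C_mul_le _ _) ?_
      rw [natDegree_X_pow]
      exact (Finset.mem_Icc.mp hj).2
    · exact Nat.zero_le _
  have hcount1 : ∀ r : ℕ, r < m → 1 ≤ P.roots.count (q ^ r) := by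
    intro r hr
    rw [count_roots]
    exact (rootMultiplicity_pos hP0).mpr (hroots r hr)
  have hsum : ∑ r ∈ Finset.range m, P.roots.count (q ^ r) ≥ m + 1 := by
    have : ∀ r ∈ Finset.range m,
        (if r = k then 2 else 1) ≤ P.roots.count (q ^ r) := by
      intro r hr
      rw [Finset.mem_range] at hr
      by_cases h : r = k
      · subst h
        simp only [if_pos rfl]
        rw [count_roots]
        exact hmult2
      · rw [if_neg h]
        exact hcount1 r hr
    refine le_trans ?_ (Finset.sum_le_sum this)
    have : (∑ r ∈ Finset.range m, if r = k then 2 else 1)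
        = (∑ r ∈ Finset.range m, ((if r = k then 1 else 0) + 1)) := by
      refine Finset.sum_congr rfl fun r _ => ?_
      by_cases h : r = k <;> simp [h]
    rw [this, Finset.sum_add_distrib, Finset.sum_ite_eq' (Finset.range m) k (fun _ => 1)]
    simp only [Finset.mem_range.mpr hkm, if_true, Finset.sum_const, Finset.card_range,
      smul_eq_mul, mul_one]
    omega
  have hsub : (Finset.range m).image (fun r => q ^ r) ⊆ P.roots.toFinset := by
    intro a ha
    rw [Finset.mem_image] at ha
    obtain ⟨r, hr, rfl⟩ := ha
    rw [Multiset.mem_toFinset, ← Multiset.count_pos]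
    exact lt_of_lt_of_le Nat.zero_lt_one (hcount1 r (Finset.mem_range.mp hr))
  have hle : ∑ r ∈ Finset.range m, P.roots.count (q ^ r) ≤ P.roots.card := by
    rw [← Finset.sum_image (f := fun a => P.roots.count a)
      (g := fun r => q ^ r) (fun x _ y _ h => hqinj h)]
    calc ∑ a ∈ (Finset.range m).image (fun r => q ^ r), P.roots.count a
        ≤ ∑ a ∈ P.roots.toFinset, P.roots.count a :=
          Finset.sum_le_sum_of_subset hsub
      _ = P.roots.card := P.roots.toFinset_sum_count_eq
  have := P.card_roots'
  omega
end

section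
/- Let τ > 0, let φ, φ₁ ∈ (−π/2, π/2), and let K, K₁ be real numbers with K·τ < −2·cos φ and K₁·τ < −2·cos φ₁. Then the symmetric 2×2 matrix H with rows (K cos φ + cos²φ/τ, (cos φ · cos φ₁)/τ) and ((cos φ · cos φ₁)/τ, K₁ cos φ₁ + cos²φ₁/τ) is negative definite; that is, both diagonal entries are negative and det H > 0, equivalently vᵀ H v < 0 for every nonzero v ∈ ℝ². -/
open scoped Matrix

/-! A negative entry `a` and positive determinant make the symmetric form
`a x² + 2 b x y + d y²` negative definite, since `a · (a x² + 2 b x y + d y²) = (a x + b y)² + (a d - b²) y²`.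
The defocusing hypothesis `K τ < -2 cos φ` says exactly that each diagonal entry lies below
`-cos² φ / τ`, and the product of these two bounds is the square of the off-diagonal entry. -/

theorem Matrix.dotProduct_mulVec_symm_fin_two (a b d : ℝ) (v : Fin 2 → ℝ) :
    v ⬝ᵥ !![a, b; b, d] *ᵥ v = a * v 0 ^ 2 + 2 * b * v 0 * v 1 + d * v 1 ^ 2 := by
  simp only [dotProduct, Matrix.mulVec, Fin.sum_univ_two, Matrix.of_apply, Matrix.cons_val',
    Matrix.cons_val_zero, Matrix.cons_val_one, Matrix.empty_val', Matrix.cons_val_fin_one]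
  ring

theorem quadratic_form_neg_of_det_pos {a b d x y : ℝ} (ha : a < 0) (hdet : b ^ 2 < a * d)
    (hxy : x ≠ 0 ∨ y ≠ 0) : a * x ^ 2 + 2 * b * x * y + d * y ^ 2 < 0 := by
  have hsum : 0 < (a * x + b * y) ^ 2 + (a * d - b ^ 2) * y ^ 2 := by
    rcases eq_or_ne y 0 with rfl | hy
    · have hx : x ≠ 0 := hxy.resolve_right (not_not.mpr rfl)
      simpa using sq_pos_of_ne_zero (mul_ne_zero ha.ne hx)
    · exact add_pos_of_nonneg_of_pos (sq_nonneg _) (mul_pos (sub_pos.mpr hdet) (sq_pos_of_ne_zero hy))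
  have hmul : 0 < a * (a * x ^ 2 + 2 * b * x * y + d * y ^ 2) := by linarith
  exact neg_of_mul_pos_right hmul ha.le

theorem Matrix.dotProduct_mulVec_symm_fin_two_neg {a b d : ℝ} (ha : a < 0)
    (hdet : b ^ 2 < a * d) {v : Fin 2 → ℝ} (hv : v ≠ 0) : v ⬝ᵥ !![a, b; b, d] *ᵥ v < 0 := by
  rw [Matrix.dotProduct_mulVec_symm_fin_two]
  refine quadratic_form_neg_of_det_pos ha hdet ?_
  by_contra! h
  exact hv (funext fun i => by fin_cases i <;> simp [h.1, h.2])

theorem defocusing_diag_lt {τ c K : ℝ} (hτ : 0 < τ) (hc : 0 < c) (hK : K * τ < -2 * c) :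
    K * c + c ^ 2 / τ < -(c ^ 2 / τ) := by
  have hKc : K * c * τ < -2 * c ^ 2 := by linarith [mul_lt_mul_of_pos_right hK hc]
  rw [← sub_neg, show K * c + c ^ 2 / τ - -(c ^ 2 / τ) = (K * c * τ + 2 * c ^ 2) / τ by
    field_simp; ring]
  exact div_neg_of_neg_of_pos (by linarith) hτ

/-- Under the defocusing mechanism `Kτ < −2cos φ`, `K₁τ < −2cos φ₁`, the Hessian of the
free path is negative definite: both diagonal entries are negative, its determinant is
positive, and `vᵀ H v < 0` for every nonzero `v`. -/
theorem free_path_hessian_negative_definite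
    (τ φ φ₁ K K₁ : ℝ) (hτ : 0 < τ)
    (hφ : φ ∈ Set.Ioo (-(Real.pi / 2)) (Real.pi / 2))
    (hφ₁ : φ₁ ∈ Set.Ioo (-(Real.pi / 2)) (Real.pi / 2))
    (hK : K * τ < -2 * Real.cos φ) (hK₁ : K₁ * τ < -2 * Real.cos φ₁) :
    let H : Matrix (Fin 2) (Fin 2) ℝ :=
      !![K * Real.cos φ + (Real.cos φ) ^ 2 / τ, Real.cos φ * Real.cos φ₁ / τ;
         Real.cos φ * Real.cos φ₁ / τ, K₁ * Real.cos φ₁ + (Real.cos φ₁) ^ 2 / τ]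
    (H 0 0 < 0 ∧ H 1 1 < 0 ∧ 0 < H.det) ∧
      ∀ v : Fin 2 → ℝ, v ≠ 0 → v ⬝ᵥ H.mulVec v < 0 := by
  intro H
  have hc := Real.cos_pos_of_mem_Ioo hφ
  have hc₁ := Real.cos_pos_of_mem_Ioo hφ₁
  set c := Real.cos φ
  set c₁ := Real.cos φ₁
  have ha := defocusing_diag_lt hτ hc hK
  have hd := defocusing_diag_lt hτ hc₁ hK₁
  have ha₀ : K * c + c ^ 2 / τ < 0 := ha.trans (neg_neg_of_pos (by positivity))
  have hd₀ : K₁ * c₁ + c₁ ^ 2 / τ < 0 := hd.trans (neg_neg_of_pos (by positivity))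
  have hdet : (c * c₁ / τ) ^ 2 < (K * c + c ^ 2 / τ) * (K₁ * c₁ + c₁ ^ 2 / τ) :=
    calc (c * c₁ / τ) ^ 2 = c ^ 2 / τ * (c₁ ^ 2 / τ) := by ring
      _ < -(K * c + c ^ 2 / τ) * -(K₁ * c₁ + c₁ ^ 2 / τ) :=
        mul_lt_mul'' (lt_neg_of_lt_neg ha) (lt_neg_of_lt_neg hd) (by positivity) (by positivity)
      _ = _ := neg_mul_neg _ _
  refine ⟨⟨ha₀, hd₀, ?_⟩, fun v hv => Matrix.dotProduct_mulVec_symm_fin_two_neg ha₀ hdet hv⟩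
  rw [Matrix.det_fin_two_of]
  linarith
end

section
/- Let λ > 1 be real, let d ≥ 2 be an even integer, and let A₀, A₁, ..., A_{d+1} be real numbers such that Σ_{j=0}^{d+1} A_j · λ^{−kj} = 0 for every integer k with 0 ≤ k ≤ d. Then for σ ∈ {1, 2}: Σ_{j=0}^{d+1} A_j · Σ_{i=1}^{j+2−σ} (λ^{−i} + λ^{i−j−3+σ})^d = binom(d, d/2) · λ^{−d(3−σ)/2} · Σ_{j=0}^{d+1} j·A_j·λ^{−dj/2}. In particular, writing 𝒜_σ for the left-hand side, 𝒜₂ = λ^{d/2}·𝒜₁. -/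
/-- Even-degree cancellation identity: if `λ > 1`, `d ≥ 2` is even, and the coefficients
`A₀, …, A_{d+1}` satisfy `∑_{j=0}^{d+1} A_j λ^{−kj} = 0` for all `0 ≤ k ≤ d`, then for
`σ ∈ {1, 2}` the quantity `𝒜_σ = ∑_j A_j ∑_{i=1}^{j+2−σ} (λ^{−i} + λ^{i−j−3+σ})^d` equals
`C(d, d/2) λ^{−d(3−σ)/2} ∑_j j A_j λ^{−dj/2}`; in particular `𝒜₂ = λ^{d/2} 𝒜₁`. -/
theorem even_degree_cancellation_identity
    (lam : ℝ) (hlam : 1 < lam) (d : ℕ) (hd : 2 ≤ d) (hde : Even d)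
    (A : ℕ → ℝ)
    (hA : ∀ k : ℕ, k ≤ d →
      ∑ j ∈ Finset.range (d + 2), A j * lam ^ (-((k : ℤ) * (j : ℤ))) = 0) :
    (∀ σ : ℕ, σ = 1 ∨ σ = 2 →
      ∑ j ∈ Finset.range (d + 2), A j *
          ∑ i ∈ Finset.Icc 1 (j + 2 - σ),
            (lam ^ (-(i : ℤ)) + lam ^ ((i : ℤ) - (j : ℤ) - 3 + (σ : ℤ))) ^ d
        = (d.choose (d / 2) : ℝ) * lam ^ (-(((d / 2 : ℕ) : ℤ) * (3 - (σ : ℤ)))) *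
            ∑ j ∈ Finset.range (d + 2),
              (j : ℝ) * A j * lam ^ (-(((d / 2 : ℕ) : ℤ) * (j : ℤ)))) ∧
    (∑ j ∈ Finset.range (d + 2), A j *
        ∑ i ∈ Finset.Icc 1 (j + 2 - 2),
          (lam ^ (-(i : ℤ)) + lam ^ ((i : ℤ) - (j : ℤ) - 3 + 2)) ^ d)
      = lam ^ (d / 2) *
        ∑ j ∈ Finset.range (d + 2), A j *
          ∑ i ∈ Finset.Icc 1 (j + 2 - 1),
            (lam ^ (-(i : ℤ)) + lam ^ ((i : ℤ) - (j : ℤ) - 3 + 1)) ^ d := by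
  have hlam0 : (0:ℝ) < lam := lt_trans one_pos hlam
  have hne : lam ≠ 0 := ne_of_gt hlam0
  obtain ⟨e, he⟩ := hde
  have hinj : Function.Injective fun n : ℤ => lam ^ n :=
    zpow_right_injective₀ hlam0 (ne_of_gt hlam)
  have key : ∀ σ : ℕ, 1 ≤ σ → σ ≤ 2 →
      ∑ j ∈ Finset.range (d + 2), A j *
          ∑ i ∈ Finset.Icc 1 (j + 2 - σ),
            (lam ^ (-(i : ℤ)) + lam ^ ((i : ℤ) - (j : ℤ) - 3 + (σ : ℤ))) ^ d
        = (d.choose (d / 2) : ℝ) * lam ^ (-(((d / 2 : ℕ) : ℤ) * (3 - (σ : ℤ)))) *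
            ∑ j ∈ Finset.range (d + 2),
              (j : ℝ) * A j * lam ^ (-(((d / 2 : ℕ) : ℤ) * (j : ℤ))) := by
    intro σ hσ1 hσ2
    -- Step 1: binomial expansion of each inner term
    have step1 : ∀ j ∈ Finset.range (d + 2),
        A j * ∑ i ∈ Finset.Icc 1 (j + 2 - σ),
            (lam ^ (-(i : ℤ)) + lam ^ ((i : ℤ) - (j : ℤ) - 3 + (σ : ℤ))) ^ d
        = ∑ m ∈ Finset.range (d + 1),
            A j * ((d.choose m : ℝ) *
              lam ^ (-(((j:ℤ) + 3 - (σ:ℤ)) * ((d:ℤ) - (m:ℤ)))) *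
              ∑ i ∈ Finset.Icc 1 (j + 2 - σ), (lam ^ ((d:ℤ) - 2*(m:ℤ))) ^ i) := by
      intro j _
      have hbin : ∀ i ∈ Finset.Icc 1 (j + 2 - σ),
          (lam ^ (-(i : ℤ)) + lam ^ ((i : ℤ) - (j : ℤ) - 3 + (σ : ℤ))) ^ d
          = ∑ m ∈ Finset.range (d + 1),
              (d.choose m : ℝ) * lam ^ (-(((j:ℤ) + 3 - (σ:ℤ)) * ((d:ℤ) - (m:ℤ))))
                * (lam ^ ((d:ℤ) - 2*(m:ℤ))) ^ i := by
        intro i _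
        rw [add_pow]
        refine Finset.sum_congr rfl ?_
        intro m hm
        have hmd : m ≤ d := Nat.lt_succ_iff.mp (Finset.mem_range.mp hm)
        have h1 : (lam ^ (-(i:ℤ))) ^ m = lam ^ ((-(i:ℤ)) * (m:ℤ)) := by
          rw [zpow_mul, zpow_natCast]
        have h2 : (lam ^ ((i : ℤ) - (j : ℤ) - 3 + (σ : ℤ))) ^ (d - m)
            = lam ^ (((i : ℤ) - (j : ℤ) - 3 + (σ : ℤ)) * ((d:ℤ) - (m:ℤ))) := by
          rw [show ((d:ℤ) - (m:ℤ)) = ((d - m : ℕ) : ℤ) by omega, zpow_mul, zpow_natCast]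
        have h3 : (lam ^ ((d:ℤ) - 2*(m:ℤ))) ^ i = lam ^ (((d:ℤ) - 2*(m:ℤ)) * (i:ℤ)) := by
          rw [zpow_mul, zpow_natCast]
        rw [h1, h2, h3, ← zpow_add₀ hne]
        rw [show (-(i:ℤ)) * (m:ℤ) + ((i : ℤ) - (j : ℤ) - 3 + (σ : ℤ)) * ((d:ℤ) - (m:ℤ))
            = -(((j:ℤ) + 3 - (σ:ℤ)) * ((d:ℤ) - (m:ℤ))) + ((d:ℤ) - 2*(m:ℤ)) * (i:ℤ) by ring]
        rw [zpow_add₀ hne]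
        ring
      rw [Finset.sum_congr rfl hbin, Finset.sum_comm, Finset.mul_sum]
      refine Finset.sum_congr rfl ?_
      intro m _
      rw [← Finset.mul_sum]
    rw [Finset.sum_congr rfl step1, Finset.sum_comm]
    -- Step 2: only m = d/2 survives
    rw [Finset.sum_eq_single_of_mem (d / 2)
        (Finset.mem_range.mpr (by omega)) ?_]
    · -- the m = d/2 term
      have hdm : (d:ℤ) - 2 * ((d/2 : ℕ) : ℤ) = 0 := by omega
      have perj : ∀ j ∈ Finset.range (d + 2),
          A j * ((d.choose (d/2) : ℝ) *
              lam ^ (-(((j:ℤ) + 3 - (σ:ℤ)) * ((d:ℤ) - ((d/2 : ℕ):ℤ)))) *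
              ∑ i ∈ Finset.Icc 1 (j + 2 - σ), (lam ^ ((d:ℤ) - 2*((d/2 : ℕ):ℤ))) ^ i)
          = (d.choose (d / 2) : ℝ) * lam ^ (-(((d / 2 : ℕ) : ℤ) * (3 - (σ : ℤ)))) *
              ((j : ℝ) * A j * lam ^ (-(((d / 2 : ℕ) : ℤ) * (j : ℤ))))
            + ((d.choose (d / 2) : ℝ) * (2 - (σ:ℝ)) *
                lam ^ (-(((d / 2 : ℕ) : ℤ) * (3 - (σ : ℤ))))) *
              (A j * lam ^ (-(((d/2 : ℕ):ℤ) * (j:ℤ)))) := by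
        intro j _
        have hcard : ∑ i ∈ Finset.Icc 1 (j + 2 - σ), (lam ^ ((d:ℤ) - 2*((d/2 : ℕ):ℤ))) ^ i
            = ((j + 2 - σ : ℕ) : ℝ) := by
          rw [hdm, zpow_zero]
          simp
        rw [hcard]
        have hNc : ((j + 2 - σ : ℕ) : ℝ) = (j : ℝ) + 2 - (σ:ℝ) := by
          rw [Nat.cast_sub (by omega : σ ≤ j + 2)]
          push_cast; ring
        have hexp : lam ^ (-(((j:ℤ) + 3 - (σ:ℤ)) * ((d:ℤ) - ((d/2 : ℕ):ℤ))))
            = lam ^ (-(((d / 2 : ℕ) : ℤ) * (3 - (σ : ℤ)))) *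
              lam ^ (-(((d / 2 : ℕ) : ℤ) * (j : ℤ))) := by
          rw [← zpow_add₀ hne]
          congr 1
          have : (d:ℤ) - ((d/2 : ℕ):ℤ) = ((d/2 : ℕ):ℤ) := by omega
          rw [this]; ring
        rw [hexp, hNc]; ring
      rw [Finset.sum_congr rfl perj, Finset.sum_add_distrib, ← Finset.mul_sum,
        ← Finset.mul_sum, hA (d / 2) (by omega), mul_zero, add_zero]
    · -- all other m give zero
      intro m hm hmne
      have hmd : m ≤ d := Nat.lt_succ_iff.mp (Finset.mem_range.mp hm)
      set t : ℤ := (d:ℤ) - 2*(m:ℤ) with ht_def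
      have ht : t ≠ 0 := by simp only [ht_def]; omega
      have hy1 : lam ^ t ≠ 1 := by
        intro h
        exact ht (hinj (by simpa using h))
      have hy : lam ^ t - 1 ≠ 0 := sub_ne_zero.mpr hy1
      have hS : ∀ N : ℕ, (∑ i ∈ Finset.Icc 1 N, (lam ^ t) ^ i) * (lam ^ t - 1)
          = (lam ^ t) ^ (N + 1) - lam ^ t := by
        intro N
        induction N with
        | zero => simp
        | succ n ih =>
          rw [Finset.sum_Icc_succ_top (by omega), add_mul, ih]
          ring
      have main0 : (∑ j ∈ Finset.range (d + 2),
          A j * ((d.choose m : ℝ) *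
            lam ^ (-(((j:ℤ) + 3 - (σ:ℤ)) * ((d:ℤ) - (m:ℤ)))) *
            ∑ i ∈ Finset.Icc 1 (j + 2 - σ), (lam ^ t) ^ i)) * (lam ^ t - 1) = 0 := by
        rw [Finset.sum_mul]
        have perj : ∀ j ∈ Finset.range (d + 2),
            A j * ((d.choose m : ℝ) *
              lam ^ (-(((j:ℤ) + 3 - (σ:ℤ)) * ((d:ℤ) - (m:ℤ)))) *
              ∑ i ∈ Finset.Icc 1 (j + 2 - σ), (lam ^ t) ^ i) * (lam ^ t - 1)
            = ((d.choose m : ℝ) * lam ^ (-((3 - (σ:ℤ)) * (m:ℤ)))) *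
                (A j * lam ^ (-((m:ℤ) * (j:ℤ))))
              - ((d.choose m : ℝ) * lam ^ t * lam ^ (-((3 - (σ:ℤ)) * ((d:ℤ) - (m:ℤ))))) *
                (A j * lam ^ (-(((d:ℤ) - (m:ℤ)) * (j:ℤ)))) := by
          intro j _
          have hre : A j * ((d.choose m : ℝ) *
              lam ^ (-(((j:ℤ) + 3 - (σ:ℤ)) * ((d:ℤ) - (m:ℤ)))) *
              ∑ i ∈ Finset.Icc 1 (j + 2 - σ), (lam ^ t) ^ i) * (lam ^ t - 1)
              = A j * ((d.choose m : ℝ) *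
                (lam ^ (-(((j:ℤ) + 3 - (σ:ℤ)) * ((d:ℤ) - (m:ℤ)))) *
                  ((∑ i ∈ Finset.Icc 1 (j + 2 - σ), (lam ^ t) ^ i) * (lam ^ t - 1)))) := by
            ring
          rw [hre, hS]
          have hyN : (lam ^ t) ^ (j + 2 - σ + 1) = lam ^ (t * ((j:ℤ) + 3 - (σ:ℤ))) := by
            rw [← zpow_natCast (lam ^ t), ← zpow_mul]
            congr 1
            have : ((j + 2 - σ + 1 : ℕ) : ℤ) = (j:ℤ) + 3 - (σ:ℤ) := by omega
            rw [this]
          rw [hyN, mul_sub, ← zpow_add₀ hne, ← zpow_add₀ hne]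
          have e1 : lam ^ (-(((j:ℤ) + 3 - (σ:ℤ)) * ((d:ℤ) - (m:ℤ))) + t * ((j:ℤ) + 3 - (σ:ℤ)))
              = lam ^ (-((3 - (σ:ℤ)) * (m:ℤ))) * lam ^ (-((m:ℤ) * (j:ℤ))) := by
            rw [← zpow_add₀ hne]
            congr 1
            simp only [ht_def]; ring
          have e2 : lam ^ (-(((j:ℤ) + 3 - (σ:ℤ)) * ((d:ℤ) - (m:ℤ))) + t)
              = lam ^ t * (lam ^ (-((3 - (σ:ℤ)) * ((d:ℤ) - (m:ℤ)))) *
                  lam ^ (-(((d:ℤ) - (m:ℤ)) * (j:ℤ)))) := by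
            rw [← zpow_add₀ hne, ← zpow_add₀ hne]
            congr 1
            ring
          rw [e1, e2]
          ring
        rw [Finset.sum_congr rfl perj, Finset.sum_sub_distrib, ← Finset.mul_sum,
          ← Finset.mul_sum, hA m hmd]
        have h2 := hA (d - m) (by omega)
        rw [show ((d - m : ℕ) : ℤ) = (d:ℤ) - (m:ℤ) by omega] at h2
        rw [h2]
        ring
      rcases mul_eq_zero.mp main0 with h | h
      · exact h
      · exact absurd h hy
  refine ⟨fun σ hσ => key σ (by omega) (by omega), ?_⟩
  have h1 := key 1 (le_refl 1) (by omega)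
  have h2 := key 2 (by omega) (le_refl 2)
  simp only [Nat.cast_one, Nat.cast_ofNat] at h1 h2
  rw [h1, h2]
  have hq : lam ^ (d / 2) * lam ^ (-(((d/2 : ℕ):ℤ) * (3 - 1))) = lam ^ (-(((d/2 : ℕ):ℤ) * (3 - 2))) := by
    rw [← zpow_natCast lam (d/2), ← zpow_add₀ hne]
    congr 1
    omega
  rw [← hq]
  ring
end

section
/- Let γ₁ : [0, L₁] → ℝ² and γ₂ : [0, L₂] → ℝ² be twice continuously differentiable unit-speed curves such that γ₂(r₁) ≠ γ₁(r) for all (r, r₁) ∈ [0, L₁] × [0, L₂]. Write τ(r, r₁) = ‖γ₂(r₁) − γ₁(r)‖ and e(r, r₁) = (γ₂(r₁) − γ₁(r))/τ(r, r₁). Assume that for every (r, r₁): ⟨γ₁''(r), e(r, r₁)⟩ · τ(r, r₁) > 2·(1 − ⟨γ₁'(r), e(r, r₁)⟩²) and −⟨γ₂''(r₁), e(r, r₁)⟩ · τ(r, r₁) > 2·(1 − ⟨γ₂'(r₁), e(r, r₁)⟩²). Then there is at most one pair (r, r₁) ∈ [0, L₁] × [0, L₂] such that ⟨γ₁'(r),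 γ₂(r₁) − γ₁(r)⟩ = 0 and ⟨γ₂'(r₁), γ₂(r₁) − γ₁(r)⟩ = 0, i.e. at most one chord perpendicular to both curves. -/
open scoped InnerProductSpace
open Set

/-!
Join the two perpendicular chords, with parameters `(r, r₁)` and `(r', r₁')`, by the segment
`t ↦ (r + tΔ, r₁ + tΔ₁)` and let `q t` be the chord vector along it. The derivative of the free
path `‖q‖` along the segment is `⟪q', q⟫ / ‖q‖`, which vanishes at both ends because both chords
are perpendicular to both curves. Its own derivative is `(‖q'‖² - ⟪q', e⟫² + ‖q‖ ⟪q'', e⟫) / ‖q‖`,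
where `q' = Δ₁ γ₂' - Δ γ₁'` and `q'' = Δ₁² γ₂'' - Δ² γ₁''`. The transverse part
`‖q'‖² - ⟪q', e⟫²` is at most `2Δ₁² (1 - ⟪γ₂', e⟫²) + 2Δ² (1 - ⟪γ₁', e⟫²)`, so the defocusing
inequalities make this second derivative negative unless `Δ = Δ₁ = 0`, and `⟪q', q⟫ / ‖q‖`
cannot vanish at both ends.
-/

section Transverse

variable {E : Type*} [NormedAddCommGroup E] [InnerProductSpace ℝ E]

theorem norm_sub_inner_smul_sq {w e : E} (he : ‖e‖ = 1) :
    ‖w - ⟪w, e⟫_ℝ • e‖ ^ 2 = ‖w‖ ^ 2 - ⟪w, e⟫_ℝ ^ 2 := by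
  rw [norm_sub_sq_real, real_inner_smul_right, norm_smul, Real.norm_eq_abs, he, mul_one,
    sq_abs]
  ring

theorem norm_sub_sq_sub_inner_sq_le {v w e : E} (he : ‖e‖ = 1) :
    ‖v - w‖ ^ 2 - ⟪v - w, e⟫_ℝ ^ 2
      ≤ 2 * (‖v‖ ^ 2 - ⟪v, e⟫_ℝ ^ 2) + 2 * (‖w‖ ^ 2 - ⟪w, e⟫_ℝ ^ 2) := by
  have hsplit : v - w - ⟪v - w, e⟫_ℝ • e = (v - ⟪v, e⟫_ℝ • e) - (w - ⟪w, e⟫_ℝ • e) := by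
    rw [inner_sub_left, sub_smul]; abel
  rw [← norm_sub_inner_smul_sq he, ← norm_sub_inner_smul_sq he, ← norm_sub_inner_smul_sq he,
    hsplit]
  have := parallelogram_law_with_norm ℝ (v - ⟪v, e⟫_ℝ • e) (w - ⟪w, e⟫_ℝ • e)
  nlinarith [norm_nonneg (v - ⟪v, e⟫_ℝ • e + (w - ⟪w, e⟫_ℝ • e))]

theorem chord_hessian_neg_of_defocusing {u₁ u₂ k₁ k₂ e : E} {τ Δ Δ₁ : ℝ} (he : ‖e‖ = 1)
    (hu₁ : ‖u₁‖ = 1) (hu₂ : ‖u₂‖ = 1)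
    (hk₁ : ⟪k₁, e⟫_ℝ * τ > 2 * (1 - ⟪u₁, e⟫_ℝ ^ 2))
    (hk₂ : -⟪k₂, e⟫_ℝ * τ > 2 * (1 - ⟪u₂, e⟫_ℝ ^ 2)) (hΔ : Δ ≠ 0 ∨ Δ₁ ≠ 0) :
    ‖Δ₁ • u₂ - Δ • u₁‖ ^ 2 - ⟪Δ₁ • u₂ - Δ • u₁, e⟫_ℝ ^ 2
      + τ * ⟪Δ₁ ^ 2 • k₂ - Δ ^ 2 • k₁, e⟫_ℝ < 0 := by
  have htrans := norm_sub_sq_sub_inner_sq_le (v := Δ₁ • u₂) (w := Δ • u₁) he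
  simp only [norm_smul, real_inner_smul_left, inner_sub_left, mul_pow, Real.norm_eq_abs,
    sq_abs, hu₁, hu₂] at htrans ⊢
  rcases hΔ with hΔ | hΔ₁
  · nlinarith [mul_lt_mul_of_pos_left hk₁ (by positivity : 0 < Δ ^ 2),
      mul_le_mul_of_nonneg_left hk₂.le (sq_nonneg Δ₁)]
  · nlinarith [mul_le_mul_of_nonneg_left hk₁.le (sq_nonneg Δ),
      mul_lt_mul_of_pos_left hk₂ (by positivity : 0 < Δ₁ ^ 2)]

theorem HasDerivWithinAt.inner_div_norm {q v : ℝ → E} {a : E} {s : Set ℝ} {t : ℝ}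
    (hq : HasDerivWithinAt q (v t) s t) (hv : HasDerivWithinAt v a s t) (hq0 : q t ≠ 0) :
    HasDerivWithinAt (fun t => ⟪v t, q t⟫_ℝ / ‖q t‖)
      ((‖v t‖ ^ 2 - ⟪v t, ‖q t‖⁻¹ • q t⟫_ℝ ^ 2 + ‖q t‖ * ⟪a, ‖q t‖⁻¹ • q t⟫_ℝ) / ‖q t‖)
      s t := by
  have hτ : 0 < ‖q t‖ := norm_pos_iff.2 hq0
  have hnorm : HasDerivWithinAt (fun t => ‖q t‖) (⟪q t, v t⟫_ℝ / ‖q t‖) s t := by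
    have := hq.norm_sq.sqrt (pow_ne_zero 2 hτ.ne')
    simp only [Real.sqrt_sq_eq_abs, abs_norm] at this
    convert this using 1
    field_simp
  refine ((hv.inner ℝ hq).div hnorm hτ.ne').congr_deriv ?_
  simp only [real_inner_smul_right, real_inner_self_eq_norm_sq, real_inner_comm (q t) (v t)]
  field_simp
  ring

theorem strictAntiOn_inner_div_norm {D : Set ℝ} (hD : Convex ℝ D) {q v a : ℝ → E}
    (hq : ∀ t ∈ D, HasDerivWithinAt q (v t) D t) (hv : ∀ t ∈ D, HasDerivWithinAt v (a t) D t)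
    (hq0 : ∀ t ∈ D, q t ≠ 0)
    (hneg : ∀ t ∈ D,
      ‖v t‖ ^ 2 - ⟪v t, ‖q t‖⁻¹ • q t⟫_ℝ ^ 2 + ‖q t‖ * ⟪a t, ‖q t‖⁻¹ • q t⟫_ℝ < 0) :
    StrictAntiOn (fun t => ⟪v t, q t⟫_ℝ / ‖q t‖) D := by
  have hF t (ht : t ∈ D) := (hq t ht).inner_div_norm (hv t ht) (hq0 t ht)
  refine strictAntiOn_of_hasDerivWithinAt_neg hD (fun t ht => (hF t ht).continuousWithinAt)
    (fun t ht => (hF t (interior_subset ht)).mono interior_subset) fun t ht => ?_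
  exact div_neg_of_neg_of_pos (hneg t (interior_subset ht))
    (norm_pos_iff.2 (hq0 t (interior_subset ht)))

end Transverse

section Segment

variable {F : Type*} [NormedAddCommGroup F] [NormedSpace ℝ F]

theorem Convex.hasDerivWithinAt_comp_segment {f : ℝ → F} {s : Set ℝ} (hs : Convex ℝ s)
    (hf : DifferentiableOn ℝ f s) {x y t : ℝ} (hx : x ∈ s) (hy : y ∈ s) (ht : t ∈ Icc 0 1) :
    HasDerivWithinAt (fun t => f (x + t * (y - x)))
      ((y - x) • derivWithin f s (x + t * (y - x))) (Icc 0 1) t := by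
  have hmaps : MapsTo (fun t => x + t * (y - x)) (Icc 0 1) s :=
    fun _ ht => hs.add_smul_sub_mem hx hy ht
  have hline : HasDerivWithinAt (fun t => x + t * (y - x)) (y - x) (Icc 0 1) t := by
    simpa using ((hasDerivAt_mul_const (y - x)).const_add x).hasDerivWithinAt
  exact (hf _ (hmaps ht)).hasDerivWithinAt.scomp t hline hmaps

theorem ContDiffOn.hasDerivWithinAt_comp_segment_Icc {γ : ℝ → F} {a b : ℝ}
    (h : ContDiffOn ℝ 2 γ (Icc a b)) {x y t : ℝ} (hx : x ∈ Icc a b) (hy : y ∈ Icc a b)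
    (ht : t ∈ Icc 0 1) :
    HasDerivWithinAt (fun t => γ (x + t * (y - x)))
        ((y - x) • derivWithin γ (Icc a b) (x + t * (y - x))) (Icc 0 1) t ∧
      HasDerivWithinAt (fun t => (y - x) • derivWithin γ (Icc a b) (x + t * (y - x)))
        ((y - x) ^ 2 • derivWithin (derivWithin γ (Icc a b)) (Icc a b) (x + t * (y - x)))
        (Icc 0 1) t := by
  rcases eq_or_ne x y with rfl | hxy
  · simp [hasDerivWithinAt_const]
  have hab : a < b := by
    by_contra! hba
    exact hxy (by linarith [hx.1, hx.2, hy.1, hy.2])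
  have h' : ContDiffOn ℝ 1 (derivWithin γ (Icc a b)) (Icc a b) :=
    h.derivWithin (uniqueDiffOn_Icc hab) (by norm_num)
  refine ⟨(convex_Icc a b).hasDerivWithinAt_comp_segment
    (h.differentiableOn (by norm_num)) hx hy ht, ?_⟩
  simpa [sq, smul_smul, Pi.smul_def] using ((convex_Icc a b).hasDerivWithinAt_comp_segment
    (h'.differentiableOn one_ne_zero) hx hy ht).const_smul (y - x)

end Segment

/-- Uniqueness of the chord perpendicular to two defocusing curves: for `C²` unit-speed
plane curves `γ₁` on `[0, L₁]` and `γ₂` on `[0, L₂]` which never meet, if the defocusing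
inequalities `⟨γ₁'', e⟩ τ > 2(1 − ⟨γ₁', e⟩²)` and `−⟨γ₂'', e⟩ τ > 2(1 − ⟨γ₂', e⟩²)` hold
at every pair of parameters (with `τ = ‖γ₂(r₁) − γ₁(r)‖` and `e` the unit chord vector),
then there is at most one chord perpendicular to both curves. -/
theorem unique_perpendicular_chord
    (L₁ L₂ : ℝ) (γ₁ γ₂ : ℝ → EuclideanSpace ℝ (Fin 2))
    (h₁ : ContDiffOn ℝ 2 γ₁ (Set.Icc 0 L₁)) (h₂ : ContDiffOn ℝ 2 γ₂ (Set.Icc 0 L₂))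
    (hu₁ : ∀ r ∈ Set.Icc 0 L₁, ‖derivWithin γ₁ (Set.Icc 0 L₁) r‖ = 1)
    (hu₂ : ∀ r₁ ∈ Set.Icc 0 L₂, ‖derivWithin γ₂ (Set.Icc 0 L₂) r₁‖ = 1)
    (hne : ∀ r ∈ Set.Icc 0 L₁, ∀ r₁ ∈ Set.Icc 0 L₂, γ₂ r₁ ≠ γ₁ r)
    (hdef₁ : ∀ r ∈ Set.Icc 0 L₁, ∀ r₁ ∈ Set.Icc 0 L₂,
      ⟪derivWithin (derivWithin γ₁ (Set.Icc 0 L₁)) (Set.Icc 0 L₁) r,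
          (‖γ₂ r₁ - γ₁ r‖)⁻¹ • (γ₂ r₁ - γ₁ r)⟫_ℝ * ‖γ₂ r₁ - γ₁ r‖
        > 2 * (1 - ⟪derivWithin γ₁ (Set.Icc 0 L₁) r,
            (‖γ₂ r₁ - γ₁ r‖)⁻¹ • (γ₂ r₁ - γ₁ r)⟫_ℝ ^ 2))
    (hdef₂ : ∀ r ∈ Set.Icc 0 L₁, ∀ r₁ ∈ Set.Icc 0 L₂,
      -⟪derivWithin (derivWithin γ₂ (Set.Icc 0 L₂)) (Set.Icc 0 L₂) r₁,
          (‖γ₂ r₁ - γ₁ r‖)⁻¹ • (γ₂ r₁ - γ₁ r)⟫_ℝ * ‖γ₂ r₁ - γ₁ r‖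
        > 2 * (1 - ⟪derivWithin γ₂ (Set.Icc 0 L₂) r₁,
            (‖γ₂ r₁ - γ₁ r‖)⁻¹ • (γ₂ r₁ - γ₁ r)⟫_ℝ ^ 2)) :
    ∀ r ∈ Set.Icc 0 L₁, ∀ r' ∈ Set.Icc 0 L₁, ∀ r₁ ∈ Set.Icc 0 L₂, ∀ r₁' ∈ Set.Icc 0 L₂,
      ⟪derivWithin γ₁ (Set.Icc 0 L₁) r, γ₂ r₁ - γ₁ r⟫_ℝ = 0 →
      ⟪derivWithin γ₂ (Set.Icc 0 L₂) r₁, γ₂ r₁ - γ₁ r⟫_ℝ = 0 →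
      ⟪derivWithin γ₁ (Set.Icc 0 L₁) r', γ₂ r₁' - γ₁ r'⟫_ℝ = 0 →
      ⟪derivWithin γ₂ (Set.Icc 0 L₂) r₁', γ₂ r₁' - γ₁ r'⟫_ℝ = 0 →
      r = r' ∧ r₁ = r₁' := by
  intro r hr r' hr' r₁ hr₁ r₁' hr₁' hp hp₁ hp' hp₁'
  by_contra hdiff
  have hΔ : r' - r ≠ 0 ∨ r₁' - r₁ ≠ 0 := by
    by_contra! h
    exact hdiff ⟨by linarith [h.1], by linarith [h.2]⟩
  set p : ℝ → ℝ := fun t => r + t * (r' - r)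
  set p₁ : ℝ → ℝ := fun t => r₁ + t * (r₁' - r₁)
  have hmem t (ht : t ∈ Icc (0 : ℝ) 1) : p t ∈ Icc 0 L₁ ∧ p₁ t ∈ Icc 0 L₂ :=
    ⟨(convex_Icc 0 L₁).add_smul_sub_mem hr hr' ht,
      (convex_Icc 0 L₂).add_smul_sub_mem hr₁ hr₁' ht⟩
  have hq t (ht : t ∈ Icc (0 : ℝ) 1) : γ₂ (p₁ t) - γ₁ (p t) ≠ 0 :=
    sub_ne_zero.2 (hne _ (hmem t ht).1 _ (hmem t ht).2)
  have hγ₁ t (ht : t ∈ Icc (0 : ℝ) 1) := h₁.hasDerivWithinAt_comp_segment_Icc hr hr' ht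
  have hγ₂ t (ht : t ∈ Icc (0 : ℝ) 1) := h₂.hasDerivWithinAt_comp_segment_Icc hr₁ hr₁' ht
  have hanti := strictAntiOn_inner_div_norm (convex_Icc 0 1)
    (q := fun t => γ₂ (p₁ t) - γ₁ (p t))
    (v := fun t => (r₁' - r₁) • derivWithin γ₂ (Icc 0 L₂) (p₁ t)
      - (r' - r) • derivWithin γ₁ (Icc 0 L₁) (p t))
    (a := fun t => (r₁' - r₁) ^ 2 • derivWithin (derivWithin γ₂ (Icc 0 L₂)) (Icc 0 L₂) (p₁ t)
      - (r' - r) ^ 2 • derivWithin (derivWithin γ₁ (Icc 0 L₁)) (Icc 0 L₁) (p t))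
    (fun t ht => (hγ₂ t ht).1.sub (hγ₁ t ht).1) (fun t ht => (hγ₂ t ht).2.sub (hγ₁ t ht).2)
    hq fun t ht => chord_hessian_neg_of_defocusing (norm_smul_inv_norm (hq t ht))
      (hu₁ _ (hmem t ht).1) (hu₂ _ (hmem t ht).2) (hdef₁ _ (hmem t ht).1 _ (hmem t ht).2)
      (hdef₂ _ (hmem t ht).1 _ (hmem t ht).2) hΔ
  have h01 := hanti (left_mem_Icc.2 zero_le_one) (right_mem_Icc.2 zero_le_one) zero_lt_one
  simp [p, p₁, inner_sub_left, real_inner_smul_left, hp, hp₁, hp', hp₁'] at h01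
end
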